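/- arXiv:2512.23314 — 2 statements merged into one kernel-verified Lean document; each statement's English description precedes it below -/
import Mathlib

section
/- Let q ≥ 2 and 0 < r < q be integers and T : ℕ → ℕ a text. For every integer k ≥ 1 and all integers s, e with k + 1 ≤ s ≤ e, the Karp–Rabin fingerprint satisfies the k-step rolling recurrence φ(s,e) ≡ φ(s−k, e−k)·r^{k} − φ(s−k, s−1)·r^{e−s+1} + φ(e−k+1, e) (mod q). (The case k = 16 is the update rule used by the data-parallel SIMD fingerprint computation, which advances 16 sliding windows per iteration.) -/
/-!
Before reduction mod `q` the fingerprint is an honest integer, and after multiplying by a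
suitable power of `r` every fingerprint in the recurrence becomes an interval sum of the same
weights `T i * r ^ (e - i)`. With prefix sums `P` of these weights the right-hand side is
`(P (e-k+1) - P (s-k)) - (P s - P (s-k)) + (P (e+1) - P (e-k+1)) = P (e+1) - P s`,
which is the left-hand side; reducing mod `q` preserves the identity as a congruence.
-/

/-- Karp–Rabin fingerprint of `T[s..e]` (1-indexed) with base `r` modulo `q`:
    `φ(s,e) = (Σ_{i=s}^{e} T(i)·r^(e−i)) mod q`.  For `e < s` (e.g. `e = s-1`)
    the sum is empty, so `φ(s,s−1) = 0`. -/
def karpRabin (q r : ℤ) (T : ℕ → ℕ) (s e : ℕ) : ℤ :=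
  (∑ i ∈ Finset.Icc s e, (T i : ℤ) * r ^ (e - i)) % q

open Finset

def karpRabinSum (r : ℤ) (T : ℕ → ℕ) (s e : ℕ) : ℤ :=
  ∑ i ∈ Icc s e, (T i : ℤ) * r ^ (e - i)

lemma karpRabin_eq_karpRabinSum_emod (q r : ℤ) (T : ℕ → ℕ) (s e : ℕ) :
    karpRabin q r T s e = karpRabinSum r T s e % q :=
  rfl

lemma karpRabinSum_mul_pow (r : ℤ) (T : ℕ → ℕ) (s e m : ℕ) :
    karpRabinSum r T s e * r ^ m = ∑ i ∈ Icc s e, (T i : ℤ) * r ^ (e + m - i) := by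
  rw [karpRabinSum, sum_mul]
  refine sum_congr rfl fun i hi => ?_
  rw [mul_assoc, ← pow_add, Nat.sub_add_comm (mem_Icc.1 hi).2]

lemma sum_Icc_eq_sub_sum_range {M : Type*} [AddCommGroup M] (f : ℕ → M) {a b : ℕ}
    (h : a ≤ b + 1) :
    ∑ i ∈ Icc a b, f i = ∑ i ∈ range (b + 1), f i - ∑ i ∈ range a, f i := by
  rw [← Ico_add_one_right_eq_Icc, sum_Ico_eq_sub _ h]

theorem karpRabinSum_roll (r : ℤ) (T : ℕ → ℕ) {k s e : ℕ} (hks : k + 1 ≤ s) (hse : s ≤ e) :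
    karpRabinSum r T s e =
      karpRabinSum r T (s - k) (e - k) * r ^ k
        - karpRabinSum r T (s - k) (s - 1) * r ^ (e - s + 1)
        + karpRabinSum r T (e - k + 1) e := by
  set P : ℕ → ℤ := fun n => ∑ i ∈ range n, (T i : ℤ) * r ^ (e - i)
  have interval (a b : ℕ) (h : a ≤ b + 1) :
      ∑ i ∈ Icc a b, (T i : ℤ) * r ^ (e - i) = P (b + 1) - P a :=
    sum_Icc_eq_sub_sum_range _ h
  rw [karpRabinSum_mul_pow, karpRabinSum_mul_pow, karpRabinSum, karpRabinSum,
    Nat.sub_add_cancel (by omega : k ≤ e), (by omega : s - 1 + (e - s + 1) = e),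
    interval _ _ (by omega), interval _ _ (by omega), interval _ _ (by omega),
    interval _ _ (by omega), (by omega : s - 1 + 1 = s)]
  ring

theorem karpRabin_roll_k_general
    (q r : ℤ)
    (T : ℕ → ℕ) (k s e : ℕ) (hks : k + 1 ≤ s) (hse : s ≤ e) :
    karpRabin q r T s e ≡
      karpRabin q r T (s - k) (e - k) * r ^ k
        - karpRabin q r T (s - k) (s - 1) * r ^ (e - s + 1)
        + karpRabin q r T (e - k + 1) e [ZMOD q] := by
  simp only [karpRabin_eq_karpRabinSum_emod]
  rw [karpRabinSum_roll r T hks hse]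
  refine (Int.mod_modEq _ q).trans ?_
  gcongr <;> exact (Int.mod_modEq _ q).symm

/-- `k`-step rolling recurrence:
    `φ(s,e) ≡ φ(s−k,e−k)·r^k − φ(s−k,s−1)·r^(e−s+1) + φ(e−k+1,e) (mod q)`. -/
theorem karpRabin_roll_k
    (q r : ℤ) (hq : 2 ≤ q) (hr0 : 0 < r) (hrq : r < q)
    (T : ℕ → ℕ) (k s e : ℕ) (hk : 1 ≤ k) (hks : k + 1 ≤ s) (hse : s ≤ e) :
    karpRabin q r T s e ≡
      karpRabin q r T (s - k) (e - k) * r ^ k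
        - karpRabin q r T (s - k) (s - 1) * r ^ (e - s + 1)
        + karpRabin q r T (e - k + 1) e [ZMOD q] :=
  karpRabin_roll_k_general q r T k s e hks hse
end

section
/- Let q be a prime, ℓ ≥ 1 an integer with ℓ ≤ q, and let a, b : Fin ℓ → ZMod q be two distinct sequences (a ≠ b). If the base r is drawn uniformly at random from ZMod q, then the probability that the Karp–Rabin fingerprints collide, i.e. that Σ_{i=0}^{ℓ−1} a(i)·r^{ℓ−1−i} = Σ_{i=0}^{ℓ−1} b(i)·r^{ℓ−1−i}, is at most (ℓ − 1)/q. -/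
/-!
The colliding bases are the roots of the difference of the two fingerprints, a nonzero
polynomial of degree less than `ℓ` in `r`; a nonzero polynomial of degree `< ℓ` over a domain
has fewer than `ℓ` roots.
-/

open Finset Polynomial

theorem Polynomial.card_lt_of_forall_sum_mul_pow_eq_zero {R : Type*} [CommRing R] [IsDomain R]
    {n : ℕ} {c : Fin n → R} (hc : c ≠ 0) {s : Finset R}
    (hs : ∀ x ∈ s, ∑ i, c i * x ^ (i : ℕ) = 0) : #s < n := by
  by_contra! hns
  let p := (degreeLTEquiv R n).symm c
  have hp : (p : R[X]) = 0 := by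
    refine eq_zero_of_degree_lt_of_eval_finset_eq_zero s
      ((mem_degreeLT.mp p.2).trans_le (by exact_mod_cast hns)) fun x hx => ?_
    rw [eval_eq_sum_degreeLTEquiv p.2, Subtype.coe_eta, LinearEquiv.apply_symm_apply]
    exact hs x hx
  exact hc ((degreeLTEquiv R n).symm.map_eq_zero_iff.mp (Subtype.ext hp))

theorem Fin.sum_mul_pow_sub_one_sub {R : Type*} [CommSemiring R] {n : ℕ} (c : Fin n → R)
    (x : R) : ∑ i : Fin n, c i * x ^ (n - 1 - (i : ℕ)) = ∑ i : Fin n, c i.rev * x ^ (i : ℕ) := by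
  rw [← Equiv.sum_comp Fin.revPerm]
  refine sum_congr rfl fun i _ => ?_
  simp only [Fin.revPerm_apply, Fin.val_rev]
  congr 2
  omega

theorem karpRabin_collision_probability_le_general
    (q : ℕ) (hq : q.Prime) (ℓ : ℕ)
    (a b : Fin ℓ → ZMod q) (hab : a ≠ b) :
    haveI : Fact q.Prime := ⟨hq⟩
    ((Finset.univ.filter (fun r : ZMod q =>
        ∑ i : Fin ℓ, a i * r ^ (ℓ - 1 - (i : ℕ)) =
        ∑ i : Fin ℓ, b i * r ^ (ℓ - 1 - (i : ℕ)))).card : ℝ) / q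
      ≤ ((ℓ : ℝ) - 1) / q := by
  have : Fact q.Prime := ⟨hq⟩
  have hc : (fun i : Fin ℓ => (a - b) i.rev) ≠ 0 := fun h =>
    hab (sub_eq_zero.mp (funext fun i => by simpa using congrFun h i.rev))
  gcongr
  rw [le_sub_iff_add_le]
  norm_cast
  refine card_lt_of_forall_sum_mul_pow_eq_zero hc fun r hr => ?_
  rw [← Fin.sum_mul_pow_sub_one_sub]
  simp only [Pi.sub_apply, sub_mul, sum_sub_distrib, sub_eq_zero]
  exact (mem_filter.mp hr).2

/-- For a prime `q`, `1 ≤ ℓ ≤ q`, and two distinct length-`ℓ` sequences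
    `a ≠ b` over `ZMod q`: if the base `r` is drawn uniformly at random from
    `ZMod q`, the probability of a Karp–Rabin fingerprint collision
    `Σ_i a(i)·r^(ℓ−1−i) = Σ_i b(i)·r^(ℓ−1−i)` — i.e. the number of colliding
    bases divided by `q` — is at most `(ℓ − 1)/q`. -/
theorem karpRabin_collision_probability_le
    (q : ℕ) (hq : q.Prime) (ℓ : ℕ) (hℓ : 1 ≤ ℓ) (hℓq : ℓ ≤ q)
    (a b : Fin ℓ → ZMod q) (hab : a ≠ b) :
    haveI : Fact q.Prime := ⟨hq⟩
    ((Finset.univ.filter (fun r : ZMod q =>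
        ∑ i : Fin ℓ, a i * r ^ (ℓ - 1 - (i : ℕ)) =
        ∑ i : Fin ℓ, b i * r ^ (ℓ - 1 - (i : ℕ)))).card : ℝ) / q
      ≤ ((ℓ : ℝ) - 1) / q :=
  karpRabin_collision_probability_le_general q hq ℓ a b hab
end
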